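/- arXiv:1902.05107 — 3 statements merged into one kernel-verified Lean document; each statement's English description precedes it below -/
import Mathlib

section
/- Let V_{i_1}, …, V_{i_{2k}}, V_{i_1} be an even cycle in the communication graph where consecutive neighbors fly in opposite directions, and let β_{ab} denote the angle of the supporting line of edge (a,b), with β_{ab} = β_{ba}. Suppose every consecutive pair on the cycle satisfies the opposite-direction synchronization relation α_{i_{m+1}} ≡ 2β_{i_{m+1} i_m} − α_{i_m} + π (mod 2π). Then such angles α exist (i.e., the cycle is synchronizable) if and only if β_{i_1 i_2} − β_{i_2 i_3} + β_{i_3 i_4} − ⋯ + β_{i_{2k−1} i_{2k}} − β_{i_{2k} i_1} ≡ 0 (mod π). -/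
/-!
Composing the relations `α (m + 1) + α m = 2 β m + π` around the cycle with alternating signs
telescopes, and the cycle having even length makes the two ends cancel: a solution forces the
alternating sum of the right-hand sides to vanish in `ℝ / 2πℤ`. Conversely, if it vanishes, the
sequence determined by `α 0 = 0` and the relations closes up after one turn. Since the `π`'s cancel
in pairs, that alternating sum is `2 ∑ (-1)^m β m`, which is `0 mod 2π` exactly when
`∑ (-1)^m β m` is a multiple of `π`.
-/

open Real
open Finset
open Fin.NatCast

theorem sum_range_neg_one_pow_zsmul_add_succ {G : Type*} [AddCommGroup G] (f : ℕ → G) (n : ℕ) :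
    ∑ j ∈ range n, (-1 : ℤ) ^ j • (f (j + 1) + f j) = f 0 - (-1 : ℤ) ^ n • f n := by
  have htel := sum_range_sub' (fun j => (-1 : ℤ) ^ j • f j) n
  rw [pow_zero, one_smul] at htel
  rw [← htel]
  refine sum_congr rfl fun j _ => ?_
  rw [pow_succ, mul_neg_one, neg_smul, sub_neg_eq_add, smul_add, add_comm]

theorem Fin.exists_add_one_add_eq_iff_sum_neg_one_pow_zsmul_eq_zero {G : Type*} [AddCommGroup G]
    {n : ℕ} [NeZero n] (hn : Even n) (c : Fin n → G) :
    (∃ α : Fin n → G, ∀ m, α (m + 1) + α m = c m) ↔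
      ∑ m : Fin n, (-1 : ℤ) ^ (m : ℕ) • c m = 0 := by
  have hsum : ∑ m : Fin n, (-1 : ℤ) ^ (m : ℕ) • c m = ∑ j ∈ range n, (-1 : ℤ) ^ j • c j := by
    simpa using Fin.sum_univ_eq_sum_range (fun j => (-1 : ℤ) ^ j • c j) n
  rw [hsum]
  constructor
  · rintro ⟨α, hα⟩
    have htel := sum_range_neg_one_pow_zsmul_add_succ (fun j => α j) n
    simp only [Nat.cast_succ, hα, Fin.natCast_self, hn.neg_one_pow, one_smul, Nat.cast_zero,
      sub_self] at htel
    exact htel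
  · intro h
    obtain ⟨f, hf⟩ : ∃ f : ℕ → G, ∀ j, f (j + 1) = c j - f j :=
      ⟨fun j => Nat.rec 0 (fun j x => c j - x) j, fun _ => rfl⟩
    have hfn : f n = f 0 := by
      have htel := sum_range_neg_one_pow_zsmul_add_succ f n
      simp only [hf, sub_add_cancel, h, hn.neg_one_pow, one_smul] at htel
      exact (sub_eq_zero.mp htel.symm).symm
    have hper : Function.Periodic f n := by
      intro j
      induction j with
      | zero => simpa using hfn
      | succ j ih => rw [add_right_comm, hf, hf, ih, Nat.cast_add, Fin.natCast_self, add_zero]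
    refine ⟨fun m => f m, fun m => ?_⟩
    have hm : m + 1 = ((m + 1 : ℕ) : Fin n) := by simp
    show f (m + 1 : Fin n) + f m = c m
    rw [hm, Fin.val_natCast, hper.map_mod_nat, hf, Fin.cast_val_eq_self, sub_add_cancel]

theorem Fin.sum_neg_one_pow_eq_zero_of_even {R : Type*} [Ring R] {n : ℕ} (hn : Even n) :
    ∑ m : Fin n, (-1 : R) ^ (m : ℕ) = 0 := by
  rw [Fin.sum_univ_eq_sum_range (fun j => (-1 : R) ^ j), neg_one_geom_sum, if_pos hn]

theorem Real.Angle.coe_two_mul_eq_zero_iff {x : ℝ} :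
    ((2 * x : ℝ) : Angle) = 0 ↔ ∃ z : ℤ, x = z * π := by
  rw [Angle.coe_eq_zero_iff]
  refine exists_congr fun z => ?_
  rw [zsmul_eq_mul]
  constructor <;> intro h <;> linarith

/-- Edge `m` of the cycle joins vertices `m` and `m + 1` (cyclically) and has supporting-line
angle `β m`. -/
theorem stmt5_general (k : ℕ) [inst : NeZero (2 * k)] (β : Fin (2 * k) → ℝ) :
    (∃ α : Fin (2 * k) → ℝ,
        ∀ m : Fin (2 * k),
          ((α (m + 1) : ℝ) : Real.Angle)
            = ((2 * β m - α m + π : ℝ) : Real.Angle)) ↔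
      (∃ z : ℤ, (∑ m : Fin (2 * k), (-1 : ℝ) ^ (m : ℕ) * β m) = z * π) := by
  have hlift : Function.Surjective fun α : Fin (2 * k) → ℝ => ((↑) : ℝ → Angle) ∘ α :=
    Function.Surjective.comp_left fun θ => Angle.induction_on θ fun x => ⟨x, rfl⟩
  have hsum : ∑ m : Fin (2 * k), (-1 : ℤ) ^ (m : ℕ) • ((2 * β m + π : ℝ) : Angle)
      = ((2 * ∑ m : Fin (2 * k), (-1 : ℝ) ^ (m : ℕ) * β m : ℝ) : Angle) := by
    simp_rw [← Angle.coe_zsmul, ← Angle.coe_coeHom, ← map_sum]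
    congr 1
    simp only [zsmul_eq_mul, Int.cast_pow, Int.cast_neg, Int.cast_one, mul_add, sum_add_distrib,
      ← sum_mul, Fin.sum_neg_one_pow_eq_zero_of_even (even_two_mul k), zero_mul, add_zero, mul_sum]
    exact sum_congr rfl fun m _ => by ring
  calc _ ↔ ∃ θ : Fin (2 * k) → Angle, ∀ m, θ (m + 1) + θ m = ((2 * β m + π : ℝ) : Angle) := by
        rw [hlift.exists]
        simp only [Function.comp_apply, Angle.coe_add, Angle.coe_sub, sub_add_eq_add_sub,
          eq_sub_iff_add_eq]
    _ ↔ _ := Fin.exists_add_one_add_eq_iff_sum_neg_one_pow_zsmul_eq_zero (even_two_mul k) _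
    _ ↔ _ := by rw [hsum, Angle.coe_two_mul_eq_zero_iff]

/-- an even cycle `i_1, …, i_{2k}` with neighbors flying in opposite
directions, where edge `m` (from vertex `m` to vertex `m+1`, cyclically) has
supporting-line angle `β m`, admits starting angles satisfying the
opposite-direction synchronization relation
`α_{m+1} ≡ 2 β_m − α_m + π (mod 2π)` on every edge iff the alternating sum
`β_0 − β_1 + β_2 − ⋯ − β_{2k−1}` is an integer multiple of `π`. -/
theorem stmt5 (k : ℕ) (hk : 0 < k) [inst : NeZero (2 * k)] (β : Fin (2 * k) → ℝ) :
    (∃ α : Fin (2 * k) → ℝ,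
        ∀ m : Fin (2 * k),
          ((α (m + 1) : ℝ) : Real.Angle)
            = ((2 * β m - α m + π : ℝ) : Real.Angle)) ↔
      (∃ z : ℤ, (∑ m : Fin (2 * k), (-1 : ℝ) ^ (m : ℕ) * β m) = z * π) :=
  stmt5_general k (inst := inst) β
end

section
/- Let P_1, …, P_k be trajectories forming a cycle in the communication graph, all robots flying in the same direction with common period T > 0. For each i let t_i ∈ (0,T) be the time to traverse the 'inside' section of trajectory i (between its two link positions on the cycle, in the direction of travel) and r_i = T − t_i the time for the complementary section. Then the cycle can be synchronized (there exist starting positions making every consecutive pair meet at their link positions) if and only if there exists a natural number z with 0 < z < k such that t_1 + t_2 + ⋯ + t_k = zT, equivalently r_1 + ⋯ + r_k = (k − z)T. -/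
/-!
Around the cycle the phase equations `α (m + 1) = α m + t m` telescope, so they are solvable in
`ℝ/Tℝ` exactly when `∑ t i` vanishes there, i.e. is an integer multiple `z T`; conversely the
partial sums of the `t i` give the phases. Since every `t i` lies in `(0, T)`, the sum lies in
`(0, k T)`, which forces `0 < z < k`.
-/

open Finset

namespace Fin

theorem partialSum_last {G : Type*} [AddCommMonoid G] {n : ℕ} (f : Fin n → G) :
    partialSum f (last n) = ∑ i, f i := by
  rw [partialSum, val_last, List.take_of_length_le (List.length_ofFn).le, List.sum_ofFn]

theorem sum_add_one_eq_sum {G : Type*} [AddCommMonoid G] {k : ℕ} [NeZero k] (α : Fin k → G) :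
    ∑ m, α (m + 1) = ∑ m, α m :=
  Fintype.sum_equiv (Equiv.addRight 1) _ _ fun _ => rfl

theorem exists_add_one_eq_add_iff_sum_eq_zero {G : Type*} [AddCommGroup G] {k : ℕ} [NeZero k]
    (f : Fin k → G) : (∃ α : Fin k → G, ∀ m, α (m + 1) = α m + f m) ↔ ∑ m, f m = 0 := by
  constructor
  · rintro ⟨α, hα⟩
    calc ∑ m, f m = ∑ m, (α (m + 1) - α m) := by simp only [hα, add_sub_cancel_left]
      _ = 0 := by rw [sum_sub_distrib, sum_add_one_eq_sum, sub_self]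
  · intro hf
    obtain ⟨n, rfl⟩ : ∃ n, k = n + 1 := Nat.exists_eq_add_one.mpr (NeZero.pos k)
    refine ⟨fun m => partialSum f m.castSucc, fun m => ?_⟩
    induction m using Fin.lastCases with
    | last =>
      dsimp only
      rw [last_add_one, castSucc_zero, partialSum_zero, ← partialSum_succ, succ_last,
        partialSum_last, hf]
    | cast j =>
      dsimp only
      rw [coeSucc_eq_succ, ← succ_castSucc, partialSum_succ]

end Fin

theorem Int.exists_natCast_of_mul_mem_Ioo {n : ℤ} {k : ℕ} {T : ℝ} (hT : 0 < T)
    (h : (n : ℝ) * T ∈ Set.Ioo 0 (k * T)) : ∃ z : ℕ, 0 < z ∧ z < k ∧ n = z := by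
  have hn : (0 : ℝ) < n := pos_of_mul_pos_left h.1 hT.le
  have hnk : (n : ℝ) < k := (mul_lt_mul_iff_left₀ hT).mp h.2
  lift n to ℕ using (Int.cast_pos.mp hn).le
  exact ⟨n, by exact_mod_cast hn, by exact_mod_cast hnk, rfl⟩

theorem sum_mem_Ioo_card_mul {ι : Type*} [Fintype ι] [Nonempty ι] {T : ℝ} {t : ι → ℝ}
    (ht : ∀ i, t i ∈ Set.Ioo 0 T) : ∑ i, t i ∈ Set.Ioo 0 (Fintype.card ι * T) := by
  refine ⟨sum_pos (fun i _ => (ht i).1) univ_nonempty, ?_⟩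
  calc ∑ i, t i < ∑ _i : ι, T := sum_lt_sum_of_nonempty univ_nonempty fun i _ => (ht i).2
    _ = Fintype.card ι * T := by rw [sum_const, card_univ, nsmul_eq_mul]

theorem stmt7_general (k : ℕ) [inst : NeZero k] (T : ℝ)
    (t : Fin k → ℝ) (ht : ∀ i, t i ∈ Set.Ioo (0 : ℝ) T) :
    (∃ α : Fin k → AddCircle T,
        ∀ m : Fin k, α (m + 1) = α m + ((t m : ℝ) : AddCircle T)) ↔
      ∃ z : ℕ, 0 < z ∧ z < k ∧ (∑ i : Fin k, t i) = z * T ∧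
        (∑ i : Fin k, (T - t i)) = (k - z : ℕ) * T := by
  have hT : 0 < T := (ht 0).1.trans (ht 0).2
  rw [Fin.exists_add_one_eq_add_iff_sum_eq_zero, ← QuotientAddGroup.mk_sum,
    AddCircle.coe_eq_zero_iff]
  constructor
  · rintro ⟨n, hn⟩
    rw [zsmul_eq_mul] at hn
    have hmem := sum_mem_Ioo_card_mul ht
    rw [← hn, Fintype.card_fin] at hmem
    obtain ⟨z, hz0, hzk, rfl⟩ := Int.exists_natCast_of_mul_mem_Ioo hT hmem
    have hsum : ∑ i, t i = z * T := by rw [← hn, Int.cast_natCast]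
    refine ⟨z, hz0, hzk, hsum, ?_⟩
    rw [sum_sub_distrib, hsum, sum_const, card_univ, Fintype.card_fin, nsmul_eq_mul,
      Nat.cast_sub hzk.le, sub_mul]
  · rintro ⟨z, -, -, hsum, -⟩
    exact ⟨z, by rw [hsum, natCast_zsmul, nsmul_eq_mul]⟩

/-- a cycle `P_1, …, P_k` of trajectories, all traversed in the same
direction with common period `T`, inside-section times `t_i ∈ (0,T)`, can be
synchronized (there are starting phases in `ℝ/Tℝ` whose consecutive differences
are the section times) iff `t_1 + ⋯ + t_k = z T` for some natural `z` with
`0 < z < k`, equivalently `(T−t_1) + ⋯ + (T−t_k) = (k−z) T`. -/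
theorem stmt7 (k : ℕ) (hk : 0 < k) [inst : NeZero k] (T : ℝ) (hT : 0 < T)
    (t : Fin k → ℝ) (ht : ∀ i, t i ∈ Set.Ioo (0 : ℝ) T) :
    (∃ α : Fin k → AddCircle T,
        ∀ m : Fin k, α (m + 1) = α m + ((t m : ℝ) : AddCircle T)) ↔
      ∃ z : ℕ, 0 < z ∧ z < k ∧ (∑ i : Fin k, t i) = z * T ∧
        (∑ i : Fin k, (T - t i)) = (k - z : ℕ) * T :=
  stmt7_general k (inst := inst) T t ht
end

section
/- Let P_1, …, P_{2k} be trajectories forming an even cycle in the communication graph, with consecutive neighbors flying in opposite directions, common period T > 0, inside-section times t_i ∈ (0,T) and outside-section times r_i = T − t_i. Then the cycle can be synchronized if and only if there exists a natural number z with 0 < z < 2k such that t_1 + r_2 + t_3 + r_4 + ⋯ + t_{2k−1} + r_{2k} = zT, equivalently r_1 + t_2 + r_3 + ⋯ + r_{2k−1} + t_{2k} = (2k − z)T. -/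
lemma stmt8_aux (n : ℕ) (hn : 1 < n) [NeZero n] (T : ℝ) (hT : 0 < T)
    (f : Fin n → ℝ) (hfmem : ∀ m, f m ∈ Set.Ioo (0 : ℝ) T) :
    (∃ α : Fin n → AddCircle T,
        ∀ m : Fin n, α (m + 1) = α m + ((f m : ℝ) : AddCircle T)) ↔
      ∃ z : ℕ, 0 < z ∧ z < n ∧ (∑ m : Fin n, f m) = z * T := by
  have hn0 : 0 < n := by omega
  have hS0 : 0 < ∑ m, f m :=
    Finset.sum_pos (fun m _ => (hfmem m).1) ⟨⟨0, hn0⟩, Finset.mem_univ _⟩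
  have hS2 : ∑ m, f m < n * T := by
    calc ∑ m, f m < ∑ _m : Fin n, T :=
          Finset.sum_lt_sum_of_nonempty ⟨⟨0, hn0⟩, Finset.mem_univ _⟩
            (fun m _ => (hfmem m).2)
      _ = n * T := by simp [mul_comm]
  have hcoesum : ((∑ m, f m : ℝ) : AddCircle T) = ∑ m, ((f m : ℝ) : AddCircle T) :=
    map_sum (QuotientAddGroup.mk' (AddSubgroup.zmultiples T)) f Finset.univ
  constructor
  · rintro ⟨α, hα⟩
    have h1 : ∑ m : Fin n, α (m + 1) = ∑ m, α m :=
      Fintype.sum_equiv (Equiv.addRight (1 : Fin n)) _ _ (fun m => rfl)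
    have h2 : ∑ m : Fin n, α (m + 1)
        = ∑ m, α m + ∑ m, ((f m : ℝ) : AddCircle T) := by
      rw [← Finset.sum_add_distrib]
      exact Finset.sum_congr rfl (fun m _ => hα m)
    have h3 : ∑ m, ((f m : ℝ) : AddCircle T) = 0 :=
      left_eq_add.mp (h1.symm.trans h2)
    have hsum0 : ((∑ m, f m : ℝ) : AddCircle T) = 0 := hcoesum.trans h3
    obtain ⟨z, hz⟩ := (AddCircle.coe_eq_zero_iff T).mp hsum0
    rw [zsmul_eq_mul] at hz
    have hz0 : 0 < z := by
      by_contra h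
      push_neg at h
      have : (z : ℝ) * T ≤ 0 :=
        mul_nonpos_of_nonpos_of_nonneg (by exact_mod_cast h) hT.le
      linarith [hz ▸ hS0]
    have hzn : z < n := by
      by_contra h
      push_neg at h
      have : (n : ℝ) * T ≤ (z : ℝ) * T := by
        apply mul_le_mul_of_nonneg_right _ hT.le
        exact_mod_cast h
      linarith [hz ▸ hS2]
    refine ⟨z.toNat, by omega, by omega, ?_⟩
    rw [← hz]
    congr 1
    exact_mod_cast (Int.toNat_of_nonneg hz0.le).symm
  · rintro ⟨z, hz0, hzn, hsum⟩
    set g : ℕ → ℝ := fun j => if h : j < n then f ⟨j, h⟩ else 0 with hg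
    have hgf : ∀ m : Fin n, g (m : ℕ) = f m := by
      intro m; simp [hg, m.isLt]
    refine ⟨fun m => ((∑ j ∈ Finset.range (m : ℕ), g j : ℝ) : AddCircle T), ?_⟩
    intro m
    have hcoeadd : ∀ a b : ℝ, ((a + b : ℝ) : AddCircle T) = (a : AddCircle T) + b :=
      fun a b => rfl
    dsimp only
    rcases lt_or_eq_of_le (Nat.succ_le_of_lt m.isLt) with hlt | heq
    · have hval : ((m + 1 : Fin n) : ℕ) = (m : ℕ) + 1 := by
        rw [Fin.add_def, Fin.val_one']
        show ((m : ℕ) + 1 % n) % n = (m : ℕ) + 1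
        rw [Nat.one_mod_eq_one.mpr (by omega)]
        exact Nat.mod_eq_of_lt hlt
      rw [hval, Finset.sum_range_succ, hgf, hcoeadd]
    · have hval : ((m + 1 : Fin n) : ℕ) = 0 := by
        rw [Fin.add_def, Fin.val_one']
        show ((m : ℕ) + 1 % n) % n = 0
        rw [Nat.one_mod_eq_one.mpr (by omega)]
        have : (m : ℕ) + 1 = n := by omega
        rw [this, Nat.mod_self]
      rw [hval]
      have hfull : (∑ j ∈ Finset.range (m : ℕ), g j) + f m = z * T := by
        have heq' : (m : ℕ) + 1 = n := by omega
        rw [← hgf, ← Finset.sum_range_succ, heq', ← hsum,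
          ← Fin.sum_univ_eq_sum_range g n]
        exact Finset.sum_congr rfl (fun i _ => hgf i)
      rw [← hcoeadd, hfull]
      simp only [Finset.range_zero, Finset.sum_empty]
      symm
      rw [show ((0:ℝ) : AddCircle T) = 0 from rfl]
      exact (AddCircle.coe_eq_zero_iff T).mpr ⟨(z : ℤ), by rw [zsmul_eq_mul]; push_cast; ring⟩

/-- an even cycle `P_1, …, P_{2k}` with consecutive neighbors flying in
opposite directions, common period `T`, inside times `t_i ∈ (0,T)` and outside
times `r_i = T − t_i`, can be synchronized iff the alternating sum
`t_1 + r_2 + t_3 + ⋯ + t_{2k−1} + r_{2k} = z T` for some natural `z` with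
`0 < z < 2k`, equivalently `r_1 + t_2 + ⋯ + r_{2k−1} + t_{2k} = (2k − z) T`.
(With zero-based indices `m : Fin (2k)`, edge `m` contributes `t m` when `m` is
even and `T − t m` when `m` is odd.) -/
theorem stmt8 (k : ℕ) (hk : 0 < k) [inst : NeZero (2 * k)] (T : ℝ) (hT : 0 < T)
    (t : Fin (2 * k) → ℝ) (ht : ∀ i, t i ∈ Set.Ioo (0 : ℝ) T) :
    (∃ α : Fin (2 * k) → AddCircle T,
        ∀ m : Fin (2 * k),
          α (m + 1) = α m
            + (((if Even (m : ℕ) then t m else T - t m) : ℝ) : AddCircle T)) ↔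
      ∃ z : ℕ, 0 < z ∧ z < 2 * k ∧
        (∑ m : Fin (2 * k), (if Even (m : ℕ) then t m else T - t m)) = z * T ∧
        (∑ m : Fin (2 * k), (if Even (m : ℕ) then T - t m else t m))
          = (2 * k - z : ℕ) * T := by
  have hfmem : ∀ m : Fin (2 * k),
      (if Even (m : ℕ) then t m else T - t m) ∈ Set.Ioo (0 : ℝ) T := by
    intro m
    have h1 := (ht m).1
    have h2 := (ht m).2
    by_cases h : Even (m : ℕ) <;> simp only [h, if_true, if_false] <;>
      exact Set.mem_Ioo.mpr ⟨by linarith, by linarith⟩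
  have H := stmt8_aux (2 * k) (by omega) T hT
    (fun m => if Even (m : ℕ) then t m else T - t m) hfmem
  have hcompl : (∑ m : Fin (2 * k), (if Even (m : ℕ) then T - t m else t m))
      = (2 * k) * T - ∑ m : Fin (2 * k), (if Even (m : ℕ) then t m else T - t m) := by
    rw [eq_sub_iff_add_eq, ← Finset.sum_add_distrib]
    have hterm : ∀ m : Fin (2 * k),
        (if Even (m : ℕ) then T - t m else t m)
          + (if Even (m : ℕ) then t m else T - t m) = T := by
      intro m; by_cases h : Even (m : ℕ) <;> simp only [h, if_true, if_false] <;> ring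
    rw [Finset.sum_congr rfl (fun m _ => hterm m)]
    simp [mul_comm]
  constructor
  · intro hα
    obtain ⟨z, hz0, hzn, hsum⟩ := H.mp hα
    refine ⟨z, hz0, hzn, hsum, ?_⟩
    rw [hcompl, hsum]
    have hc : ((2 * k - z : ℕ) : ℝ) = (2 * k : ℕ) - (z : ℝ) := by
      push_cast [Nat.cast_sub hzn.le]; ring
    rw [hc]; push_cast; ring
  · rintro ⟨z, hz0, hzn, hsum, -⟩
    exact H.mpr ⟨z, hz0, hzn, hsum⟩
end
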